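/- arXiv:2505.23436 — 2 statements merged into one kernel-verified Lean document; each statement's English description precedes it below -/
import Mathlib

section
/- Risk-neutral behavior for large budgets: for horizon T and rewards uniformly bounded by ‖R‖_∞, if at every time t the budget satisfies b_t ≥ (T - t + 1)·‖R‖_∞, then the policy that always plays the risk-neutral optimal action a* = argmax_a E[R(Y_a)] is optimal from time t onward; i.e., choosing a* maximizes the optimal action-value q*_t(b, ·) for all such b. -/
open Finset

/-- Optimal value-to-go of the survival MDP with `n` remaining steps and
budget `b`: budgets evolve by `b' = b + max (-b) (R ω)` with `ω ~ p a`, the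
per-step reward is the clipped reward `max (-b) (R ω)`, and the process
stops (value `0`) once the budget is not positive. -/
noncomputable def vopt {Ω A : Type*} [Fintype Ω] [Fintype A] [Nonempty A]
    (p : A → Ω → ℝ) (R : Ω → ℝ) : ℕ → ℝ → ℝ
  | 0, _ => 0
  | n + 1, b =>
      if 0 < b then
        Finset.univ.sup' Finset.univ_nonempty (fun a =>
          ∑ ω, p a ω * (max (-b) (R ω) + vopt p R n (b + max (-b) (R ω))))
      else 0

/-- Optimal action-value `q*` at budget `b > 0` with `n` further remaining
steps after the current one:
`q(b,a) = E[R̃(Y_a,b)] + Σ_{b'} P[b'|b,a]·v*(b')`. -/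
noncomputable def qval {Ω A : Type*} [Fintype Ω] [Fintype A] [Nonempty A]
    (p : A → Ω → ℝ) (R : Ω → ℝ) (n : ℕ) (b : ℝ) (a : A) : ℝ :=
  ∑ ω, p a ω * (max (-b) (R ω) + vopt p R n (b + max (-b) (R ω)))

/-- Risk-neutral behavior for large budgets: for horizon `T`
and rewards uniformly bounded by `‖R‖_∞`, if at a time with `n` remaining
steps after the current one the budget satisfies `b ≥ (n + 1)·‖R‖_∞`
(i.e. `b_t ≥ (T - t + 1)·‖R‖_∞`), then the risk-neutral optimal action
`a* = argmax_a E[R(Y_a)]` maximizes the optimal action-value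
`q*_t(b, ·)`. -/
theorem risk_neutral_large_budget_policy
    {Ω A : Type*} [Fintype Ω] [Fintype A] [Nonempty A]
    (p : A → Ω → ℝ) (hp : ∀ a ω, 0 ≤ p a ω) (hpsum : ∀ a, ∑ ω, p a ω = 1)
    (R : Ω → ℝ) (Rnorm : ℝ) (hR : ∀ ω, |R ω| ≤ Rnorm)
    (astar : A)
    (hstar : ∀ a, a ≠ astar →
      (∑ ω, p a ω * R ω) < ∑ ω, p astar ω * R ω)
    (n : ℕ) (b : ℝ) (hb : ((n : ℝ) + 1) * Rnorm ≤ b) :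
    ∀ a : A, qval p R n b a ≤ qval p R n b astar := by

  classical
  have hΩ : Nonempty Ω := by
    by_contra h
    rw [not_nonempty_iff] at h
    have := hpsum astar
    simp at this
  have hRn : 0 ≤ Rnorm := le_trans (abs_nonneg _) (hR (Classical.arbitrary Ω))
  set μ := ∑ ω, p astar ω * R ω with hμ
  have hle : ∀ a', (∑ ω, p a' ω * R ω) ≤ μ := by
    intro a'
    by_cases h : a' = astar
    · subst h; exact le_refl _
    · exact (hstar a' h).le
  have heach : ∀ (a' : A) (c : ℝ) (x : ℝ), Rnorm ≤ c →
      (∑ ω, p a' ω * (max (-c) (R ω) + x)) = (∑ ω, p a' ω * R ω) + x := by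
    intro a' c x hc
    have hmax : ∀ ω, max (-c) (R ω) = R ω := by
      intro ω
      exact max_eq_right (by have := (abs_le.mp (hR ω)).1; linarith)
    simp only [hmax, mul_add]
    rw [Finset.sum_add_distrib, ← Finset.sum_mul, hpsum a', one_mul]
  have key : ∀ (m : ℕ) (c : ℝ), (m : ℝ) * Rnorm ≤ c → vopt p R m c = m * μ := by
    intro m
    induction m with
    | zero => intro c _; simp [vopt]
    | succ k ih =>
      intro c hc
      push_cast at hc
      have hRc : Rnorm ≤ c := by nlinarith
      by_cases hcpos : 0 < c
      · rw [vopt, if_pos hcpos]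
        have hmax : ∀ ω, max (-c) (R ω) = R ω := by
          intro ω
          exact max_eq_right (by have := (abs_le.mp (hR ω)).1; linarith)
        have hrec : ∀ ω, vopt p R k (c + max (-c) (R ω)) = k * μ := by
          intro ω
          rw [hmax ω]
          apply ih
          have := (abs_le.mp (hR ω)).1
          nlinarith
        have hval : ∀ a', (∑ ω, p a' ω * (max (-c) (R ω) + vopt p R k (c + max (-c) (R ω))))
            = (∑ ω, p a' ω * R ω) + k * μ := by
          intro a'
          calc (∑ ω, p a' ω * (max (-c) (R ω) + vopt p R k (c + max (-c) (R ω))))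
              = ∑ ω, p a' ω * (max (-c) (R ω) + k * μ) := by
                apply Finset.sum_congr rfl; intro ω _; rw [hrec ω]
            _ = (∑ ω, p a' ω * R ω) + k * μ := heach a' c _ hRc
        apply le_antisymm
        · apply Finset.sup'_le
          intro a' _
          rw [hval a']
          have := hle a'
          push_cast
          linarith
        · have h1 := Finset.le_sup' (fun a' =>
            ∑ ω, p a' ω * (max (-c) (R ω) + vopt p R k (c + max (-c) (R ω))))
            (Finset.mem_univ astar)
          rw [hval astar] at h1
          push_cast
          linarith
      · rw [vopt, if_neg hcpos]
        push_neg at hcpos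
        have hRz : Rnorm = 0 := by nlinarith
        have hμz : μ = 0 := by
          rw [hμ]
          apply Finset.sum_eq_zero
          intro ω _
          have h1 := hR ω
          rw [hRz] at h1
          have : R ω = 0 := abs_eq_zero.mp (le_antisymm h1 (abs_nonneg _))
          rw [this, mul_zero]
        rw [hμz, mul_zero]
  intro a
  have hRb : Rnorm ≤ b := by nlinarith
  have hrec : ∀ ω, vopt p R n (b + max (-b) (R ω)) = n * μ := by
    intro ω
    have hmax : max (-b) (R ω) = R ω :=
      max_eq_right (by have := (abs_le.mp (hR ω)).1; linarith)
    rw [hmax]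
    apply key
    have := (abs_le.mp (hR ω)).1
    nlinarith
  have hq : ∀ a', qval p R n b a' = (∑ ω, p a' ω * R ω) + n * μ := by
    intro a'
    unfold qval
    calc (∑ ω, p a' ω * (max (-b) (R ω) + vopt p R n (b + max (-b) (R ω))))
        = ∑ ω, p a' ω * (max (-b) (R ω) + n * μ) := by
          apply Finset.sum_congr rfl; intro ω _; rw [hrec ω]
      _ = (∑ ω, p a' ω * R ω) + n * μ := heach a' b _ hRb
  rw [hq a, hq astar]
  have := hle a
  linarith
end

section
/- If β̂·v̄ ≥ ε̂ + (v̄ - v̲) with 0 ≤ v̲ ≤ v̄ and survival probabilities p_â, p_a ∈ [0,1] satisfying p_â - p_a ≥ β̂, and reward gap r_a - r_â ≤ ε̂, then r_â + v̲·p_â ≥ r_a + v̄·p_a. -/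
/-- Core algebraic inequality of the short-term risk aversion
theorem.  If `β̂·v̄ ≥ ε̂ + (v̄ - v̲)` (equivalently `β̂ ≥ (ε̂ + v̄ - v̲)/v̄`
since `v̄ > 0`), `0 ≤ v̲ ≤ v̄`, survival probabilities
`p_â, p_a ∈ [0,1]` with `p_â - p_a ≥ β̂`, and reward gap `r_a - r_â ≤ ε̂`,
then `r_â + v̲·p_â ≥ r_a + v̄·p_a`. -/
theorem short_term_risk_aversion_algebra
    (vbar vlow phat pa βhat εhat rhat ra : ℝ)
    (hvbar : 0 < vbar) (hvlow0 : 0 ≤ vlow) (hvle : vlow ≤ vbar)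
    (hphat0 : 0 ≤ phat) (hphat1 : phat ≤ 1)
    (hpa0 : 0 ≤ pa) (hpa1 : pa ≤ 1)
    (hgap : βhat ≤ phat - pa)
    (hrew : ra - rhat ≤ εhat)
    (hcond : εhat + (vbar - vlow) ≤ βhat * vbar) :
    ra + vbar * pa ≤ rhat + vlow * phat := by
  nlinarith [mul_nonneg hvlow0 hphat0, mul_le_mul_of_nonneg_left hphat1 (sub_nonneg.mpr hvle), mul_le_mul_of_nonneg_right hgap hvbar.le, mul_nonneg (sub_nonneg.mpr hvle) hphat0]
end
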